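/- Let α ∈ (0,1) be an irrational badly approximable number. Then the set {β ∈ (0,1) : β is badly approximable with respect to α} has Hausdorff dimension 1. -/

import Mathlib

/-!
Let `c ≤ 1/2` be a constant with `|q α - p| ≥ c / |q|` for `q ≠ 0`; then the points `q α - p` with
`|q| ≤ Q` are `c / (2Q)`-separated. Fix `N = 2 ^ k` and call a level-`n` interval
`[x, x + δₙ]`, `δₙ = c / (256 Nⁿ)`, safe if it avoids the `δ₁ / |q|`-neighbourhoods of all `q α - p`
with `0 < |q| < Nⁿ`. Split a safe interval into `N` subintervals of length `δₙ₊₁`: a subinterval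
can fail to be safe only because of a point `q α - p` with `Nⁿ ≤ |q| < Nⁿ⁺¹` within `δₙ₊₁` of it,
and by the separation there are only about `N / 32` such subintervals. So at least `N / 8` of the
even-indexed subintervals are safe, and keeping `N / 8` of them at every level yields a Cantor set
of points badly approximable with respect to `α`, in which points whose codes first differ at
level `n` are at least `δₙ₊₁` apart. Reading the codes as base-`N / 8` expansions maps this Cantor
set onto `[0, 1]` by a Hölder map of exponent `log (N / 8) / log N = 1 - 3 / k`, so its dimension is
at least `1 - 3 / k` for every `k`.
-/

/-- `α` is badly approximable: there is `c > 0` with `|α − p/q| ≥ c/q²` for all integers `p`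
and nonzero integers `q`. -/
def BadlyApproximable (α : ℝ) : Prop :=
  ∃ c : ℝ, 0 < c ∧ ∀ p q : ℤ, q ≠ 0 → c / (q : ℝ) ^ 2 ≤ |α - (p : ℝ) / (q : ℝ)|

/-- `β` is badly approximable with respect to `α`: there is `C > 0` with
`|qα − β − p| > C/|q|` for all `p ∈ ℤ` and `q ∈ ℤ \ {0}`. -/
def BadApproxWrt (α β : ℝ) : Prop :=
  ∃ C : ℝ, 0 < C ∧ ∀ p q : ℤ, q ≠ 0 → C / |(q : ℝ)| < |(q : ℝ) * α - β - (p : ℝ)|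

open Set Function
open scoped ENNReal NNReal

theorem abs_ofDigits_sub_ofDigits_le_of_firstDiff_sep {m : ℕ} {Φ : (ℕ → Fin m) → ℝ}
    {a N r : ℝ} (ha : 0 < a) (hN : 0 < N) (hr : 0 < r) (hNm : N ^ r ≤ m)
    (hsep : ∀ σ τ, σ ≠ τ → a / N ^ PiNat.firstDiff σ τ ≤ |Φ σ - Φ τ|) (σ τ : ℕ → Fin m) :
    |Real.ofDigits σ - Real.ofDigits τ| ≤ (a ^ r)⁻¹ * |Φ σ - Φ τ| ^ r := by
  rcases eq_or_ne σ τ with rfl | hne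
  · simp [Real.zero_rpow hr.ne']
  set n := PiNat.firstDiff σ τ
  calc |Real.ofDigits σ - Real.ofDigits τ| ≤ ((m : ℝ) ^ n)⁻¹ :=
        Real.abs_ofDigits_sub_ofDigits_le fun i hi => PiNat.apply_eq_of_lt_firstDiff hi
    _ ≤ ((N ^ r) ^ n)⁻¹ := by gcongr
    _ = (a ^ r)⁻¹ * (a / N ^ n) ^ r := by
        rw [Real.div_rpow ha.le (by positivity), ← Real.rpow_natCast, ← Real.rpow_natCast,
          ← Real.rpow_mul hN.le, ← Real.rpow_mul hN.le, mul_comm (n : ℝ)]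
        field_simp
    _ ≤ _ := by gcongr; exact hsep σ τ hne

theorem le_dimH_range_of_firstDiff_sep {m : ℕ} (hm : 1 < m) {Φ : (ℕ → Fin m) → ℝ}
    {a N : ℝ} {r : ℝ≥0} (ha : 0 < a) (hN : 0 < N) (hr : 0 < r) (hNm : N ^ (r : ℝ) ≤ m)
    (hsep : ∀ σ τ, σ ≠ τ → a / N ^ PiNat.firstDiff σ τ ≤ |Φ σ - Φ τ|) :
    (r : ℝ≥0∞) ≤ dimH (range Φ) := by
  have hinj : Injective Φ := fun σ τ h => by
    by_contra hne
    have := hsep σ τ hne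
    rw [h, sub_self, abs_zero] at this
    exact this.not_gt (by positivity)
  have : Nonempty (ℕ → Fin m) := ⟨fun _ => ⟨0, by omega⟩⟩
  set G : ℝ → ℝ := Real.ofDigits ∘ invFun Φ
  have hG : ∀ σ, G (Φ σ) = Real.ofDigits σ := fun σ =>
    congrArg Real.ofDigits (leftInverse_invFun hinj σ)
  have hol : HolderOnWith (a ^ (r : ℝ))⁻¹.toNNReal r G (range Φ) := by
    rintro _ ⟨σ, rfl⟩ _ ⟨τ, rfl⟩
    rw [edist_dist, edist_dist, hG, hG, Real.dist_eq, Real.dist_eq,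
      ENNReal.ofReal_rpow_of_nonneg (abs_nonneg _) r.coe_nonneg]
    exact (ENNReal.ofReal_le_ofReal (abs_ofDigits_sub_ofDigits_le_of_firstDiff_sep ha hN hr hNm
      hsep σ τ)).trans_eq (ENNReal.ofReal_mul (by positivity))
  have hsurj : Icc 0 1 ⊆ G '' range Φ := by
    intro y hy
    obtain ⟨σ, -, rfl⟩ := Real.ofDigits_SurjOn hm hy
    exact ⟨Φ σ, mem_range_self σ, hG σ⟩
  have hIcc : dimH (Icc (0 : ℝ) 1) = 1 := by
    rw [Real.dimH_of_nonempty_interior (by simp), Module.finrank_self, Nat.cast_one]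
  calc (r : ℝ≥0∞) = r * dimH (Icc (0 : ℝ) 1) := by rw [hIcc, mul_one]
    _ ≤ r * (dimH (range Φ) / r) := by
        gcongr; exact (dimH_mono hsurj).trans (hol.dimH_image_le hr)
    _ = dimH (range Φ) := ENNReal.mul_div_cancel (by simpa using hr.ne') ENNReal.coe_ne_top

theorem le_abs_sub_of_mem_Icc_two_mul {a b : ℕ} (hab : a ≠ b) {x d u v : ℝ} (hd : 0 ≤ d)
    (hu : u ∈ Icc (x + 2 * a * d) (x + 2 * a * d + d))
    (hv : v ∈ Icc (x + 2 * b * d) (x + 2 * b * d + d)) : d ≤ |u - v| := by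
  rcases hab.lt_or_gt with h | h
  · have h' : (a : ℝ) + 1 ≤ b := by exact_mod_cast h
    rw [abs_sub_comm, abs_of_nonneg (by nlinarith [hu.2, hv.1])]
    nlinarith [hu.2, hv.1]
  · have h' : (b : ℝ) + 1 ≤ a := by exact_mod_cast h
    rw [abs_of_nonneg (by nlinarith [hu.1, hv.2])]
    nlinarith [hu.1, hv.2]

section CantorScheme

variable {m : ℕ} (g : ℕ → ℝ → Fin m → ℕ) (δ : ℕ → ℝ) (x₀ : ℝ)

/-- The digits `σ` select nested intervals `[schemeLeft σ n, schemeLeft σ n + δ n]`: inside the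
level-`n` interval starting at `x`, digit `i` selects the subinterval starting at
`x + 2 * g n x i * δ (n + 1)`; the even offsets leave gaps between distinct children. -/
noncomputable def schemeLeft (σ : ℕ → Fin m) : ℕ → ℝ
  | 0 => x₀
  | n + 1 => schemeLeft σ n + 2 * g n (schemeLeft σ n) (σ n) * δ (n + 1)

noncomputable def schemePoint (σ : ℕ → Fin m) : ℝ :=
  ⨆ n, schemeLeft g δ x₀ σ n

variable {g δ x₀}

theorem schemeLeft_congr {σ τ : ℕ → Fin m} {n : ℕ} (h : ∀ i < n, σ i = τ i) :
    schemeLeft g δ x₀ σ n = schemeLeft g δ x₀ τ n := by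
  induction n with
  | zero => rfl
  | succ n ih =>
    simp only [schemeLeft, ih fun i hi => h i (by omega), h n n.lt_succ_self]

theorem schemePoint_mem_Icc (hδ : ∀ n, 0 ≤ δ n)
    (hsub : ∀ n x i, (2 * g n x i + 1 : ℝ) * δ (n + 1) ≤ δ n) (σ : ℕ → Fin m) (n : ℕ) :
    schemePoint g δ x₀ σ ∈ Icc (schemeLeft g δ x₀ σ n) (schemeLeft g δ x₀ σ n + δ n) := by
  have hmono : Monotone (schemeLeft g δ x₀ σ) := monotone_nat_of_le_succ fun n => by
    simp only [schemeLeft]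
    nlinarith [hδ (n + 1)]
  have hanti : Antitone fun n => schemeLeft g δ x₀ σ n + δ n := antitone_nat_of_succ_le fun n => by
    simp only [schemeLeft]
    linarith [hsub n (schemeLeft g δ x₀ σ n) (σ n)]
  exact mem_iInter.1 (hmono.ciSup_mem_iInter_Icc_of_antitone hanti fun n =>
    le_add_of_nonneg_right (hδ n)) n

theorem schemePoint_sep (hδ : ∀ n, 0 ≤ δ n)
    (hsub : ∀ n x i, (2 * g n x i + 1 : ℝ) * δ (n + 1) ≤ δ n) (hinj : ∀ n x, Injective (g n x))
    {σ τ : ℕ → Fin m} (hne : σ ≠ τ) :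
    δ (PiNat.firstDiff σ τ + 1) ≤ |schemePoint g δ x₀ σ - schemePoint g δ x₀ τ| := by
  set n := PiNat.firstDiff σ τ
  have hx : schemeLeft g δ x₀ τ n = schemeLeft g δ x₀ σ n :=
    (schemeLeft_congr (σ := σ) (τ := τ) fun _ hi => PiNat.apply_eq_of_lt_firstDiff hi).symm
  have hσ := schemePoint_mem_Icc (x₀ := x₀) hδ hsub σ (n + 1)
  have hτ := schemePoint_mem_Icc (x₀ := x₀) hδ hsub τ (n + 1)
  simp only [schemeLeft, hx] at hσ hτ
  exact le_abs_sub_of_mem_Icc_two_mul ((hinj _ _).ne (PiNat.apply_firstDiff_ne hne))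
    (hδ _) hσ hτ

end CantorScheme

theorem card_le_of_near_separated {S : Finset ℕ} {y : ℕ → ℝ} {L M : ℕ} (hL : 0 < L)
    (hS : ∀ j ∈ S, j < L * M) (hy : ∀ j ∈ S, y j ∈ Icc ((j : ℝ) - 1) (j + 2))
    (hsep : ∀ j ∈ S, ∀ j' ∈ S, y j ≠ y j' → (L : ℝ) ≤ |y j - y j'|) :
    S.card ≤ 4 * (M + 3) := by
  have hL' : (0 : ℝ) < L := by exact_mod_cast hL
  -- `⌊y j / L⌋` determines `y j` by the separation, and then `j - ⌊y j⌋ ∈ [-2, 1]` determines `j`.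
  let F : ℕ → ℤ × ℤ := fun j => (⌊y j / L⌋, j - ⌊y j⌋)
  have hmaps : ∀ j ∈ S, F j ∈ Finset.Icc (-1 : ℤ) (M + 1) ×ˢ Finset.Icc (-2 : ℤ) 1 := by
    intro j hj
    obtain ⟨hy₁, hy₂⟩ := hy j hj
    have hjLM : (j : ℝ) + 1 ≤ L * M := by exact_mod_cast hS j hj
    have hlo : ((-1 : ℤ) : ℝ) ≤ y j / L := by
      rw [le_div_iff₀ hL']; push_cast; nlinarith [(Nat.one_le_cast (α := ℝ)).2 hL]
    have hhi : y j / L < ((M + 1 + 1 : ℤ) : ℝ) := by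
      rw [div_lt_iff₀ hL']; push_cast; nlinarith [(Nat.one_le_cast (α := ℝ)).2 hL]
    have hfl₁ : (j : ℤ) - 1 ≤ ⌊y j⌋ := Int.le_floor.2 (by push_cast; linarith)
    have hfl₂ : ⌊y j⌋ < (j : ℤ) + 3 := Int.floor_lt.2 (by push_cast; linarith)
    have h₁ := Int.le_floor.2 hlo
    have h₂ := Int.floor_lt.2 hhi
    simp only [F, Finset.mem_product, Finset.mem_Icc]
    omega
  have hinj : InjOn F S := by
    intro j hj j' hj' hF
    simp only [F, Prod.mk.injEq] at hF
    have hyy : y j = y j' := by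
      by_contra hne
      have h := Int.abs_sub_lt_one_of_floor_eq_floor hF.1
      rw [← sub_div, abs_div, abs_of_pos hL', div_lt_one hL'] at h
      exact (hsep j hj j' hj' hne).not_gt h
    rw [hyy] at hF
    exact_mod_cast (sub_left_inj.1 hF.2 : (j : ℤ) = j')
  calc S.card ≤ (Finset.Icc (-1 : ℤ) (M + 1) ×ˢ Finset.Icc (-2 : ℤ) 1).card :=
        Finset.card_le_card_of_injOn F hmaps hinj
    _ = 4 * (M + 3) := by simp [Finset.card_product]; omega

def IsBadApproxConst (α c : ℝ) : Prop :=
  ∀ p q : ℤ, q ≠ 0 → c / |(q : ℝ)| ≤ |q * α - p|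

theorem BadlyApproximable.exists_isBadApproxConst {α : ℝ} (h : BadlyApproximable α) :
    ∃ c, 0 < c ∧ c ≤ 1 / 2 ∧ IsBadApproxConst α c := by
  obtain ⟨c, hc, hα⟩ := h
  refine ⟨c, hc, ?_, fun p q hq => ?_⟩
  · have h1 := hα (round α) 1 one_ne_zero
    norm_num at h1
    linarith [abs_sub_round α]
  · have hq' : (0 : ℝ) < |(q : ℝ)| := abs_pos.2 (Int.cast_ne_zero.2 hq)
    calc c / |(q : ℝ)| = c / (q : ℝ) ^ 2 * |(q : ℝ)| := by
          rw [← sq_abs]; field_simp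
      _ ≤ |α - p / q| * |(q : ℝ)| := by gcongr; exact hα p q hq
      _ = |q * α - p| := by
          rw [← abs_mul]; congr 1; field_simp [Int.cast_ne_zero.2 hq]

theorem IsBadApproxConst.le_abs_sub {α c : ℝ} (h : IsBadApproxConst α c) (hc₀ : 0 ≤ c)
    (hc : c ≤ 1 / 2) {q p q' p' : ℤ} (hne : (q, p) ≠ (q', p')) {Q : ℝ} (hQ : 1 ≤ Q)
    (hq : |(q : ℝ)| ≤ Q) (hq' : |(q' : ℝ)| ≤ Q) :
    c / (2 * Q) ≤ |(q * α - p) - (q' * α - p')| := by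
  rcases eq_or_ne q q' with rfl | hqq
  · have hpp : p' - p ≠ 0 := sub_ne_zero.2 fun h => hne (by rw [h])
    have h1 : (1 : ℝ) ≤ |((p' - p : ℤ) : ℝ)| := by
      rw [← Int.cast_abs]; exact_mod_cast Int.one_le_abs hpp
    calc c / (2 * Q) ≤ 1 := by rw [div_le_one (by linarith)]; linarith
      _ ≤ _ := by push_cast at h1; convert h1 using 2; ring
  · have hd : q - q' ≠ 0 := sub_ne_zero.2 hqq
    have hdQ : |((q - q' : ℤ) : ℝ)| ≤ 2 * Q := by
      push_cast; linarith [abs_sub (q : ℝ) q']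
    calc c / (2 * Q) ≤ c / |((q - q' : ℤ) : ℝ)| := by gcongr
      _ ≤ _ := by convert h (p - p') (q - q') hd using 2; push_cast; ring

section SafeIntervals

variable {α c : ℝ} {k n : ℕ} {x : ℝ}

-- With this normalisation the separation `c / (2 N ^ (n + 1))` of the points `q α - p`,
-- `|q| < N ^ (n + 1)`, is `128` lengths of level `n + 1` (here `N = 2 ^ k`).
noncomputable def levelLength (c : ℝ) (k n : ℕ) : ℝ := c / 256 / ((2 : ℝ) ^ k) ^ n

/-- The interval `[x, x + levelLength c k n]` stays at distance more than `levelLength c k 1 / |q|`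
from every point `q α - p` with `0 < |q| < 2 ^ (k n)`. -/
def IsSafe (α c : ℝ) (k n : ℕ) (x : ℝ) : Prop :=
  ∀ q p : ℤ, q ≠ 0 → |(q : ℝ)| < ((2 : ℝ) ^ k) ^ n →
    ∀ β ∈ Icc x (x + levelLength c k n), levelLength c k 1 / |(q : ℝ)| < |q * α - β - p|

theorem levelLength_pos (hc : 0 < c) (n : ℕ) : 0 < levelLength c k n := by
  unfold levelLength; positivity

theorem levelLength_succ (c : ℝ) (k n : ℕ) :
    levelLength c k (n + 1) = levelLength c k 1 / ((2 : ℝ) ^ k) ^ n := by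
  simp only [levelLength, pow_succ]; field_simp

theorem levelLength_succ_mul (c : ℝ) (k n : ℕ) :
    levelLength c k (n + 1) * 2 ^ k = levelLength c k n := by
  simp only [levelLength, pow_succ]; field_simp

theorem isSafe_zero : IsSafe α c k 0 x := fun q _ hq hlt => by
  rw [pow_zero] at hlt
  exact absurd hlt (not_lt.2 (by exact_mod_cast Int.one_le_abs hq))

theorem exists_resonance_of_not_isSafe (hc : 0 < c) (hx : IsSafe α c k n x) {j : ℕ}
    (hj : j < 2 ^ k)
    (hbad : ¬ IsSafe α c k (n + 1) (x + j * levelLength c k (n + 1))) :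
    ∃ q p : ℤ, |(q : ℝ)| < ((2 : ℝ) ^ k) ^ (n + 1) ∧
      (q * α - p : ℝ) ∈ Icc (x + j * levelLength c k (n + 1) - levelLength c k (n + 1))
        (x + j * levelLength c k (n + 1) + 2 * levelLength c k (n + 1)) := by
  set δ := levelLength c k (n + 1)
  have hδ : 0 < δ := levelLength_pos hc _
  simp only [IsSafe, not_forall, not_lt] at hbad
  obtain ⟨q, p, hq, hqlt, β, hβ, hclose⟩ := hbad
  have hj' : (j : ℝ) + 1 ≤ 2 ^ k := by exact_mod_cast hj
  have hβx : β ∈ Icc x (x + levelLength c k n) := by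
    rw [← levelLength_succ_mul]
    constructor <;> nlinarith [hβ.1, hβ.2]
  have hqge : ((2 : ℝ) ^ k) ^ n ≤ |(q : ℝ)| := not_lt.1 fun h => (hx q p hq h β hβx).not_ge hclose
  have hsmall : levelLength c k 1 / |(q : ℝ)| ≤ δ :=
    (div_le_div_of_nonneg_left (levelLength_pos hc 1).le (by positivity) hqge).trans_eq
      (levelLength_succ c k n).symm
  have hw := abs_le.1 (hclose.trans hsmall)
  exact ⟨q, p, hqlt, by constructor <;> linarith [hβ.1, hβ.2, hw.1, hw.2]⟩

open scoped Classical in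
theorem card_filter_not_isSafe_le (hc₀ : 0 < c) (hc : c ≤ 1 / 2) (hba : IsBadApproxConst α c)
    (hk : 7 ≤ k) (hx : IsSafe α c k n x) :
    ((Finset.range (2 ^ k)).filter
      fun j : ℕ => ¬ IsSafe α c k (n + 1) (x + j * levelLength c k (n + 1))).card ≤
      4 * (2 ^ (k - 7) + 3) := by
  set δ := levelLength c k (n + 1)
  have hδ : 0 < δ := levelLength_pos hc₀ _
  set Q : ℝ := ((2 : ℝ) ^ k) ^ (n + 1)
  have hQ : 1 ≤ Q := one_le_pow₀ (one_le_pow₀ one_le_two)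
  have hQδ : c / (2 * Q) = 128 * δ := by simp only [δ, Q, levelLength]; field_simp; ring
  have hres : ∀ j ∈ (Finset.range (2 ^ k)).filter
      (fun j : ℕ => ¬ IsSafe α c k (n + 1) (x + j * δ)), ∃ qp : ℤ × ℤ,
        |(qp.1 : ℝ)| < Q ∧ (qp.1 * α - qp.2 : ℝ) ∈ Icc (x + j * δ - δ) (x + j * δ + 2 * δ) := by
    intro j hj
    rw [Finset.mem_filter, Finset.mem_range] at hj
    obtain ⟨q, p, h⟩ := exists_resonance_of_not_isSafe hc₀ hx hj.1 hj.2
    exact ⟨(q, p), h⟩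
  choose! qp hqpQ hqp using hres
  have h2k : 2 ^ k = 128 * 2 ^ (k - 7) := by
    rw [← pow_sub_mul_pow 2 hk]; ring
  refine card_le_of_near_separated (L := 128) (M := 2 ^ (k - 7))
    (y := fun j => ((qp j).1 * α - (qp j).2 - x) / δ) (by norm_num)
    (fun j hj => h2k ▸ Finset.mem_range.1 (Finset.mem_filter.1 hj).1)
    (fun j hj => ?_) (fun j hj j' hj' hne => ?_)
  · obtain ⟨h₁, h₂⟩ := hqp j hj
    constructor
    · rw [le_div_iff₀ hδ]; linarith
    · rw [div_le_iff₀ hδ]; linarith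
  · have hqq : qp j ≠ qp j' := fun h => hne (by simp only [h])
    have hsep := hba.le_abs_sub hc₀.le hc hqq hQ (hqpQ j hj).le (hqpQ j' hj').le
    rw [← sub_div, abs_div, abs_of_pos hδ, le_div_iff₀ hδ, sub_sub_sub_cancel_right]
    push_cast
    linarith

open scoped Classical in
theorem exists_isSafe_children (hc₀ : 0 < c) (hc : c ≤ 1 / 2) (hba : IsBadApproxConst α c)
    (hk : 7 ≤ k) (hx : IsSafe α c k n x) :
    ∃ g : Fin (2 ^ (k - 3)) → ℕ, Injective g ∧
      ∀ i, 2 * g i < 2 ^ k ∧ IsSafe α c k (n + 1) (x + 2 * g i * levelLength c k (n + 1)) := by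
  have h2k : 2 ^ k = 2 * 2 ^ (k - 1) := by rw [← pow_succ']; congr 1; omega
  set safe := (Finset.range (2 ^ (k - 1))).filter
    fun t : ℕ => IsSafe α c k (n + 1) (x + 2 * t * levelLength c k (n + 1)) with hsafe
  have hunsafe : ((Finset.range (2 ^ (k - 1))).filter
      fun t : ℕ => ¬ IsSafe α c k (n + 1) (x + 2 * t * levelLength c k (n + 1))).card ≤
      4 * (2 ^ (k - 7) + 3) := by
    refine le_trans (Finset.card_le_card_of_injOn (2 * ·) (fun t ht => ?_)
      (fun t _ t' _ h => by simpa using h)) (card_filter_not_isSafe_le hc₀ hc hba hk hx)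
    rw [Finset.mem_coe, Finset.mem_filter, Finset.mem_range] at ht ⊢
    refine ⟨?_, by push_cast; exact ht.2⟩
    simp only
    omega
  have hcard : 2 ^ (k - 3) ≤ safe.card := by
    have h := Finset.card_filter_add_card_filter_not (s := Finset.range (2 ^ (k - 1)))
      fun t : ℕ => IsSafe α c k (n + 1) (x + 2 * t * levelLength c k (n + 1))
    rw [Finset.card_range, ← hsafe] at h
    have h1 : 2 ^ (k - 1) = 64 * 2 ^ (k - 7) := by
      rw [show k - 1 = k - 7 + 6 by omega, pow_add]; ring
    have h3 : 2 ^ (k - 3) = 16 * 2 ^ (k - 7) := by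
      rw [show k - 3 = k - 7 + 4 by omega, pow_add]; ring
    have : 1 ≤ 2 ^ (k - 7) := Nat.one_le_two_pow
    omega
  refine ⟨safe.orderEmbOfCardLe hcard, (safe.orderEmbOfCardLe hcard).injective, fun i => ?_⟩
  have h := Finset.mem_filter.1 (safe.orderEmbOfCardLe_mem hcard i)
  rw [Finset.mem_range] at h
  exact ⟨by omega, h.2⟩

theorem exists_isSafe_selector (hc₀ : 0 < c) (hc : c ≤ 1 / 2) (hba : IsBadApproxConst α c)
    (hk : 7 ≤ k) :
    ∃ g : ℕ → ℝ → Fin (2 ^ (k - 3)) → ℕ, (∀ n x, Injective (g n x)) ∧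
      (∀ n x i, 2 * g n x i < 2 ^ k) ∧ ∀ n x, IsSafe α c k n x →
        ∀ i, IsSafe α c k (n + 1) (x + 2 * g n x i * levelLength c k (n + 1)) := by
  have hchildren : ∀ n x, ∃ g : Fin (2 ^ (k - 3)) → ℕ, Injective g ∧ (∀ i, 2 * g i < 2 ^ k) ∧
      (IsSafe α c k n x → ∀ i, IsSafe α c k (n + 1) (x + 2 * g i * levelLength c k (n + 1))) := by
    intro n x
    by_cases hx : IsSafe α c k n x
    · obtain ⟨g, hg, hgs⟩ := exists_isSafe_children hc₀ hc hba hk hx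
      exact ⟨g, hg, fun i => (hgs i).1, fun _ i => (hgs i).2⟩
    · refine ⟨Fin.val, Fin.val_injective, fun i => ?_, fun h => absurd h hx⟩
      have : 2 ^ k = 8 * 2 ^ (k - 3) := by rw [show k = k - 3 + 3 by omega, pow_add]; simp; ring
      omega
  choose g hg_inj hg_lt hg_safe using hchildren
  exact ⟨g, hg_inj, hg_lt, hg_safe⟩

theorem badApproxWrt_of_forall_isSafe (hc₀ : 0 < c) (hk : k ≠ 0) {β : ℝ}
    (h : ∀ n, ∃ x, IsSafe α c k n x ∧ β ∈ Icc x (x + levelLength c k n)) :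
    BadApproxWrt α β := by
  refine ⟨levelLength c k 1, levelLength_pos hc₀ 1, fun p q hq => ?_⟩
  obtain ⟨n, hn⟩ := pow_unbounded_of_one_lt |(q : ℝ)| (one_lt_pow₀ one_lt_two hk)
  obtain ⟨x, hx, hβ⟩ := h n
  exact hx q p hq hn β hβ

end SafeIntervals

theorem exists_rpow_two_pow_le {r : ℝ} (hr : r < 1) (k₀ : ℕ) :
    ∃ k ≥ k₀, ((2 : ℝ) ^ k) ^ r ≤ 2 ^ (k - 3) := by
  refine ⟨max k₀ (max 3 ⌈3 / (1 - r)⌉₊), le_max_left _ _, ?_⟩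
  set k := max k₀ (max 3 ⌈3 / (1 - r)⌉₊)
  have hk3 : 3 ≤ k := le_max_of_le_right (le_max_left _ _)
  have hkr : 3 / (1 - r) ≤ k :=
    (Nat.le_ceil _).trans (by exact_mod_cast le_max_of_le_right (le_max_right _ _))
  rw [div_le_iff₀ (by linarith)] at hkr
  rw [← Real.rpow_natCast, ← Real.rpow_natCast, ← Real.rpow_mul zero_le_two, Nat.cast_sub hk3]
  exact Real.rpow_le_rpow_of_exponent_le one_le_two (by push_cast; linarith)

theorem le_dimH_setOf_badApproxWrt {α : ℝ} (hba : BadlyApproximable α) {r : ℝ≥0} (hr : r < 1) :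
    (r : ℝ≥0∞) ≤ dimH {β : ℝ | β ∈ Ioo (0 : ℝ) 1 ∧ BadApproxWrt α β} := by
  rcases eq_zero_or_pos r with rfl | hr₀
  · simp
  obtain ⟨c, hc₀, hc, hbc⟩ := hba.exists_isBadApproxConst
  obtain ⟨k, hk, hkr⟩ := exists_rpow_two_pow_le (r := r) (by exact_mod_cast hr) 7
  obtain ⟨g, hg_inj, hg_lt, hg_safe⟩ := exists_isSafe_selector hc₀ hc hbc hk
  have hδ : ∀ n, 0 ≤ levelLength c k n := fun n => (levelLength_pos hc₀ n).le
  have hsub : ∀ n x i, (2 * g n x i + 1 : ℝ) * levelLength c k (n + 1) ≤ levelLength c k n :=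
    fun n x i => by
      have : (2 * g n x i + 1 : ℝ) ≤ 2 ^ k := by exact_mod_cast hg_lt n x i
      nlinarith [hδ (n + 1), levelLength_succ_mul c k n]
  have hsafe : ∀ σ n, IsSafe α c k n (schemeLeft g (levelLength c k) (1 / 4) σ n) := by
    intro σ n
    induction n with
    | zero => exact isSafe_zero
    | succ n ih => exact hg_safe n _ ih (σ n)
  calc (r : ℝ≥0∞) ≤ dimH (range (schemePoint g (levelLength c k) (1 / 4))) := by
        refine le_dimH_range_of_firstDiff_sep (N := 2 ^ k) (Nat.one_lt_two_pow (by omega))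
          (levelLength_pos (k := k) hc₀ 1) (by positivity) hr₀ (by simpa using hkr)
          fun σ τ hne => ?_
        rw [← levelLength_succ]
        exact schemePoint_sep hδ hsub hg_inj hne
    _ ≤ _ := by
        refine dimH_mono (range_subset_iff.2 fun σ => ⟨?_, ?_⟩)
        · have h := schemePoint_mem_Icc (x₀ := 1 / 4) hδ hsub σ 0
          simp only [schemeLeft, levelLength, pow_zero, div_one] at h
          constructor <;> linarith [h.1, h.2]
        · exact badApproxWrt_of_forall_isSafe hc₀ (by omega) fun n =>
            ⟨_, hsafe σ n, schemePoint_mem_Icc hδ hsub σ n⟩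

theorem stmt1 (α : ℝ) (hba : BadlyApproximable α) :
    dimH {β : ℝ | β ∈ Set.Ioo (0 : ℝ) 1 ∧ BadApproxWrt α β} = 1 := by
  refine le_antisymm ((dimH_mono (subset_univ _)).trans_eq Real.dimH_univ) ?_
  exact ENNReal.le_of_forall_nnreal_lt fun r hr =>
    le_dimH_setOf_badApproxWrt hba (by exact_mod_cast hr)
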